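/- For every finite graph G and integer r ≥ 0, well_r(G) ≤ 4 · (1 + link_{3r}(G))²; in fact, every depth-r well-linked set S is depth-3r ⌊√|S|/2⌋-linked. -/

import Mathlib

open SimpleGraph

variable {V : Type*}

/-- `B` induces a connected subgraph of `G`. -/
def ConnSet (G : SimpleGraph V) (B : Set V) : Prop := (G.induce B).Connected

/-- `B` induces a subgraph of `G` of radius at most `r`. -/
def RadiusLE (G : SimpleGraph V) (B : Set V) (r : ℕ) : Prop :=
  ∃ u : B, ∀ v : B, (G.induce B).dist u v ≤ r

/-- Two vertex sets touch: they share a vertex or are joined by an edge. -/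
def Touch (G : SimpleGraph V) (A B : Set V) : Prop :=
  (A ∩ B).Nonempty ∨ ∃ a ∈ A, ∃ b ∈ B, G.Adj a b

/-- A depth-`r` bramble. -/
def IsBramble (G : SimpleGraph V) (r : ℕ) (𝓑 : Finset (Set V)) : Prop :=
  (∀ B ∈ 𝓑, ConnSet G B ∧ RadiusLE G B r) ∧ ∀ B ∈ 𝓑, ∀ C ∈ 𝓑, Touch G B C

/-- A bramble with no bound on the radius of its elements. -/
def IsBrambleND (G : SimpleGraph V) (𝓑 : Finset (Set V)) : Prop :=
  (∀ B ∈ 𝓑, ConnSet G B) ∧ ∀ B ∈ 𝓑, ∀ C ∈ 𝓑, Touch G B C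

def IsHittingSet (𝓑 : Finset (Set V)) (X : Finset V) : Prop :=
  ∀ B ∈ 𝓑, ∃ x ∈ X, x ∈ B

/-- The order of a bramble: minimum size of a hitting set. -/
noncomputable def brambleOrder (𝓑 : Finset (Set V)) : ℕ :=
  sInf {n | ∃ X : Finset V, X.card = n ∧ IsHittingSet 𝓑 X}

/-- The depth-`r` bramble number. -/
noncomputable def bn (G : SimpleGraph V) (r : ℕ) : ℕ :=
  sSup {n | ∃ 𝓑 : Finset (Set V), IsBramble G r 𝓑 ∧ brambleOrder 𝓑 = n}

/-- A depth-`r` `t`-bramble: any `t` (not necessarily distinct) elements intersect. -/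
def IsTBramble (G : SimpleGraph V) (r t : ℕ) (𝓑 : Finset (Set V)) : Prop :=
  IsBramble G r 𝓑 ∧ ∀ f : Fin t → Set V, (∀ i, f i ∈ 𝓑) → (⋂ i, f i).Nonempty

/-- The depth-`r` `t`-bramble number. -/
noncomputable def bnT (G : SimpleGraph V) (r t : ℕ) : ℕ :=
  sSup {n | ∃ 𝓑 : Finset (Set V), IsTBramble G r t 𝓑 ∧ brambleOrder 𝓑 = n}

/-- A depth-`r` tangle. -/
def IsTangle (G : SimpleGraph V) (r : ℕ) (𝓑 : Finset (Set V)) : Prop :=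
  IsBramble G r 𝓑 ∧ ∀ T₁ ∈ 𝓑, ∀ T₂ ∈ 𝓑, ∀ T₃ ∈ 𝓑,
    (T₁ ∩ T₂ ∩ T₃).Nonempty ∨
      ∃ a b : V, G.Adj a b ∧ (a ∈ T₁ ∨ b ∈ T₁) ∧ (a ∈ T₂ ∨ b ∈ T₂) ∧ (a ∈ T₃ ∨ b ∈ T₃)

/-- The depth-`r` tangle number. -/
noncomputable def tn (G : SimpleGraph V) (r : ℕ) : ℕ :=
  sSup {n | ∃ 𝓑 : Finset (Set V), IsTangle G r 𝓑 ∧ brambleOrder 𝓑 = n}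

/-- The set of vertices strongly `k`-reachable from `v` w.r.t. the linear order
given by the embedding `π : V ↪ ℕ`. -/
def SReach (G : SimpleGraph V) (π : V ↪ ℕ) (k : ℕ) (v : V) : Set V :=
  {u | π u ≤ π v ∧ ∃ p : G.Walk v u, p.IsPath ∧ p.length ≤ k ∧
    ∀ w ∈ p.support, w ≠ v → w ≠ u → π v < π w}

/-- The strong `k`-coloring number. -/
noncomputable def scol (G : SimpleGraph V) (k : ℕ) : ℕ :=
  sInf {n | ∃ π : V ↪ ℕ, ∀ v : V, (SReach G π k v).ncard ≤ n}

/-- A depth-`r` minor-model of `H` in `G`. -/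
def IsMinorModel {W : Type*} (G : SimpleGraph V) (H : SimpleGraph W) (r : ℕ)
    (M : W → Set V) : Prop :=
  (∀ w, ConnSet G (M w) ∧ RadiusLE G (M w) r) ∧
  (Pairwise fun w w' => Disjoint (M w) (M w')) ∧
  ∀ ⦃w w'⦄, H.Adj w w' → ∃ a ∈ M w, ∃ b ∈ M w', G.Adj a b

/-- `ω_r(G)`: the largest `t` such that `K_t` is a depth-`r` minor of `G`. -/
noncomputable def cliqueMinorNum (G : SimpleGraph V) (r : ℕ) : ℕ :=
  sSup {t | ∃ M : Fin t → Set V, IsMinorModel G (⊤ : SimpleGraph (Fin t)) r M}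

/-- `grid_r(G)`: the largest `t` such that the `t × t` grid is a depth-`r` minor of `G`. -/
noncomputable def gridMinorNum (G : SimpleGraph V) (r : ℕ) : ℕ :=
  sSup {t | ∃ M : Fin t × Fin t → Set V,
    IsMinorModel G (SimpleGraph.pathGraph t □ SimpleGraph.pathGraph t) r M}

/-- `S` is depth-`r` `k`-linked. -/
def IsLinkedSet (G : SimpleGraph V) (r k : ℕ) (S : Set V) : Prop :=
  ∀ X : Finset V, X.card < k →
    ∃ B : Set V, (∀ x ∈ X, x ∉ B) ∧ ConnSet G B ∧ RadiusLE G B r ∧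
      S.ncard < 2 * (S ∩ B).ncard

/-- The depth-`r` linkedness of `G`. -/
noncomputable def linkNum (G : SimpleGraph V) (r : ℕ) : ℕ :=
  sSup {k | ∃ S : Set V, IsLinkedSet G r k S}

/-- `S` is depth-`r` well-linked. -/
def IsWellLinkedSet (G : SimpleGraph V) (r : ℕ) (S : Set V) : Prop :=
  ∀ A B : Finset V, ↑A ⊆ S → ↑B ⊆ S → A.card = B.card →
    ∀ Y : Finset V, Y.card < A.card →
      ∃ (a b : V) (p : G.Walk a b), a ∈ A ∧ b ∈ B ∧ p.IsPath ∧ p.length ≤ r ∧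
        ∀ w ∈ p.support, w ∉ Y

/-- The depth-`r` well-linkedness of `G`. -/
noncomputable def wellNum (G : SimpleGraph V) (r : ℕ) : ℕ :=
  sSup {n | ∃ S : Set V, IsWellLinkedSet G r S ∧ S.ncard = n}

/-!
Let `|X| = x` with `(2x + 2)² ≤ |S|`. A maximal set `T ⊆ S \ X` of vertices pairwise at distance
more than `2r` in `G - X` has at most `2x + 1` elements, since two disjoint `(x + 1)`-subsets of
`T` are joined by a path of length at most `r` avoiding `X`. The `2r`-balls around `T` cover
`S \ X`, so by pigeonhole the `2r`-ball around some `t` contains more than `x` vertices of `S`.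
The `3r`-ball around `t` in `G - X` then contains a majority of `S`: otherwise more than `x`
vertices of `S` lie outside it, and a path of length at most `r` from the `2r`-ball to them
would end inside the `3r`-ball.
-/

open Finset

def ReachAvoiding (G : SimpleGraph V) (X : Finset V) (L : ℕ) (a v : V) : Prop :=
  ∃ p : G.Walk a v, p.length ≤ L ∧ ∀ w ∈ p.support, w ∉ X

namespace ReachAvoiding

variable {G : SimpleGraph V} {X : Finset V} {L L' : ℕ} {a b c : V}

lemma refl (ha : a ∉ X) : ReachAvoiding G X L a a :=
  ⟨.nil, by simp, by simpa using ha⟩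

lemma symm (h : ReachAvoiding G X L a b) : ReachAvoiding G X L b a := by
  obtain ⟨p, hp, hX⟩ := h
  exact ⟨p.reverse, by simpa, by simpa using hX⟩

lemma trans (h : ReachAvoiding G X L a b) (h' : ReachAvoiding G X L' b c) :
    ReachAvoiding G X (L + L') a c := by
  obtain ⟨p, hp, hX⟩ := h
  obtain ⟨q, hq, hX'⟩ := h'
  refine ⟨p.append q, by simp; omega, fun w hw => ?_⟩
  exact (Walk.mem_support_append_iff p q).mp hw |>.elim (hX w) (hX' w)

lemma mono (hL : L ≤ L') (h : ReachAvoiding G X L a b) : ReachAvoiding G X L' a b := by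
  obtain ⟨p, hp, hX⟩ := h
  exact ⟨p, hp.trans hL, hX⟩

lemma notMem_right (h : ReachAvoiding G X L a b) : b ∉ X := by
  obtain ⟨p, -, hX⟩ := h
  exact hX b p.end_mem_support

lemma of_mem_support [DecidableEq V] {p : G.Walk a b} (hp : p.length ≤ L)
    (hX : ∀ w ∈ p.support, w ∉ X) {w : V} (hw : w ∈ p.support) : ReachAvoiding G X L a w :=
  ⟨p.takeUntil w hw, (p.length_takeUntil_le_length hw).trans hp,
    fun u hu => hX u (p.support_takeUntil_subset_support hw hu)⟩

end ReachAvoiding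

section Ball

variable {G : SimpleGraph V} {X : Finset V} {L : ℕ} {a : V}

lemma exists_induce_walk_length_le_of_reachAvoiding (ha : a ∉ X) {v : V}
    (hv : ReachAvoiding G X L a v) :
    ∃ q : (G.induce {v | ReachAvoiding G X L a v}).Walk ⟨a, .refl ha⟩ ⟨v, hv⟩, q.length ≤ L := by
  classical
  obtain ⟨p, hp, hX⟩ := hv
  have hB : ∀ w ∈ p.support, ReachAvoiding G X L a w := fun w hw => .of_mem_support hp hX hw
  refine ⟨p.induce _ hB, ?_⟩
  have hlen := congrArg Walk.length (p.map_induce hB)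
  rw [Walk.length_map] at hlen
  exact hlen.trans_le hp

lemma radiusLE_reachAvoiding (ha : a ∉ X) :
    RadiusLE G {v | ReachAvoiding G X L a v} L :=
  ⟨⟨a, .refl ha⟩, fun v =>
    let ⟨q, hq⟩ := exists_induce_walk_length_le_of_reachAvoiding ha v.2
    (dist_le q).trans hq⟩

lemma connSet_reachAvoiding (ha : a ∉ X) : ConnSet G {v | ReachAvoiding G X L a v} := by
  rw [ConnSet, connected_iff]
  refine ⟨fun u v => ?_, ⟨⟨a, .refl ha⟩⟩⟩
  obtain ⟨p, -⟩ := exists_induce_walk_length_le_of_reachAvoiding ha u.2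
  obtain ⟨q, -⟩ := exists_induce_walk_length_le_of_reachAvoiding ha v.2
  exact ⟨p.reverse.append q⟩

end Ball

theorem Finset.exists_pairwise_not_rel_dominating {α : Type*}
    {R : α → α → Prop} (hR : ∀ s t, R s t → R t s) (U : Finset α) (hrefl : ∀ u ∈ U, R u u) :
    ∃ T ⊆ U, (T : Set α).Pairwise (fun s t => ¬ R s t) ∧ ∀ u ∈ U, ∃ t ∈ T, R t u := by
  classical
  induction U using Finset.induction_on with
  | empty => exact ⟨∅, subset_refl _, by simp, by simp⟩
  | insert v U hv ih =>
    obtain ⟨T, hTU, hT, hdom⟩ := ih fun u hu => hrefl u (mem_insert_of_mem hu)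
    by_cases hvT : ∃ t ∈ T, R t v
    · refine ⟨T, hTU.trans (subset_insert v U), hT, fun u hu => ?_⟩
      rcases mem_insert.mp hu with rfl | hu
      exacts [hvT, hdom u hu]
    · push Not at hvT
      refine ⟨insert v T, insert_subset_insert v hTU, ?_, fun u hu => ?_⟩
      · rw [coe_insert]
        exact hT.insert fun t ht _ => ⟨fun hvt => hvT t ht (hR v t hvt), hvT t ht⟩
      · rcases mem_insert.mp hu with rfl | hu
        · exact ⟨u, mem_insert_self u T, hrefl u (mem_insert_self u U)⟩
        · obtain ⟨t, ht, htu⟩ := hdom u hu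
          exact ⟨t, mem_insert_of_mem ht, htu⟩

theorem Finset.exists_lt_card_filter_of_mul_lt_card {α β : Type*}
    {R : α → β → Prop} [∀ t, DecidablePred (R t)] {T : Finset α} {U : Finset β} {k : ℕ}
    (hdom : ∀ u ∈ U, ∃ t ∈ T, R t u) (hU : #T * k < #U) :
    ∃ t ∈ T, k < #(U.filter (R t)) := by
  classical
  by_contra! h
  have hcover : U ⊆ T.biUnion fun t => U.filter (R t) := fun u hu =>
    let ⟨t, ht, htu⟩ := hdom u hu
    mem_biUnion.mpr ⟨t, ht, mem_filter.mpr ⟨hu, htu⟩⟩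
  exact (card_le_card hcover |>.trans (card_biUnion_le_card_mul _ _ _ h)).not_gt hU

namespace IsWellLinkedSet

variable {G : SimpleGraph V} {r : ℕ}

theorem exists_reachAvoiding {S : Set V} (hS : IsWellLinkedSet G r S) {A B X : Finset V}
    (hA : ↑A ⊆ S) (hB : ↑B ⊆ S) (hXA : #X < #A) (hXB : #X < #B) :
    ∃ a ∈ A, ∃ b ∈ B, ReachAvoiding G X r a b := by
  obtain ⟨A', hA'A, hA'⟩ := exists_subset_card_eq (Nat.succ_le_of_lt hXA)
  obtain ⟨B', hB'B, hB'⟩ := exists_subset_card_eq (Nat.succ_le_of_lt hXB)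
  obtain ⟨a, b, p, ha, hb, -, hp, hX⟩ :=
    hS A' B' ((coe_subset.mpr hA'A).trans hA) ((coe_subset.mpr hB'B).trans hB)
      (hA'.trans hB'.symm) X (by omega)
  exact ⟨a, hA'A ha, b, hB'B hb, p, hp, hX⟩

theorem card_le_of_pairwise_not_reachAvoiding [DecidableEq V] {S : Set V}
    (hS : IsWellLinkedSet G r S) {T X : Finset V} (hTS : ↑T ⊆ S)
    (hT : (T : Set V).Pairwise fun s t => ¬ ReachAvoiding G X r s t) :
    #T ≤ 2 * #X + 1 := by
  by_contra! hcard
  obtain ⟨A, hAT, hA⟩ := exists_subset_card_eq (show #X + 1 ≤ #T by omega)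
  have hTA : #X < #(T \ A) := by rw [card_sdiff_of_subset hAT]; omega
  obtain ⟨a, ha, b, hb, hab⟩ := hS.exists_reachAvoiding ((coe_subset.mpr hAT).trans hTS)
    ((coe_subset.mpr sdiff_subset).trans hTS) (by omega) hTA
  obtain ⟨hbT, hbA⟩ := mem_sdiff.mp hb
  exact hT (hAT ha) hbT (fun h => hbA (h ▸ ha)) hab

open scoped Classical in
theorem exists_lt_card_filter_reachAvoiding {S : Finset V} (hS : IsWellLinkedSet G r ↑S)
    {X : Finset V} (hX : (2 * #X + 2) ^ 2 ≤ #S) :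
    ∃ t ∉ X, #X < #(S.filter (ReachAvoiding G X (2 * r) t)) := by
  obtain ⟨T, hTU, hT, hdom⟩ := Finset.exists_pairwise_not_rel_dominating
    (R := ReachAvoiding G X (2 * r)) (fun _ _ => ReachAvoiding.symm) (S \ X)
    fun u hu => .refl (mem_sdiff.mp hu).2
  have hTcard : #T ≤ 2 * #X + 1 := hS.card_le_of_pairwise_not_reachAvoiding
    (coe_subset.mpr (hTU.trans sdiff_subset))
    fun s hs t ht hst h => hT hs ht hst (h.mono (Nat.le_mul_of_pos_left r two_pos))
  have hSX : #S ≤ #(S \ X) + #X := card_le_card_sdiff_add_card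
  obtain ⟨t, htT, ht⟩ := Finset.exists_lt_card_filter_of_mul_lt_card (k := #X) hdom
    (by nlinarith [Nat.mul_le_mul_right #X hTcard])
  exact ⟨t, (mem_sdiff.mp (hTU htT)).2,
    ht.trans_le (card_le_card (filter_subset_filter _ sdiff_subset))⟩

theorem lt_two_mul_card_filter_reachAvoiding [DecidableEq V] {S : Finset V}
    (hS : IsWellLinkedSet G r ↑S) {X : Finset V} (hX : 4 * #X < #S) {t : V}
    [DecidablePred (ReachAvoiding G X (2 * r) t)] [DecidablePred (ReachAvoiding G X (3 * r) t)]
    (ht : #X < #(S.filter (ReachAvoiding G X (2 * r) t))) :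
    #S < 2 * #(S.filter (ReachAvoiding G X (3 * r) t)) := by
  by_contra! hball
  set F := (S \ X).filter fun v => ¬ ReachAvoiding G X (3 * r) t v
  have hF : #X < #F := by
    have hsplit : #((S \ X).filter (ReachAvoiding G X (3 * r) t)) + #F = #(S \ X) :=
      card_filter_add_card_filter_not _
    have hin : #((S \ X).filter (ReachAvoiding G X (3 * r) t)) ≤
        #(S.filter (ReachAvoiding G X (3 * r) t)) :=
      card_le_card (filter_subset_filter _ sdiff_subset)
    have hSX : #S ≤ #(S \ X) + #X := card_le_card_sdiff_add_card
    omega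
  obtain ⟨d, hd, f, hf, hdf⟩ := hS.exists_reachAvoiding
    (coe_subset.mpr (filter_subset _ _)) (coe_subset.mpr (filter_subset _ _ |>.trans sdiff_subset))
    ht hF
  have htf : ReachAvoiding G X (3 * r) t f :=
    ((mem_filter.mp hd).2.trans hdf).mono (by omega)
  exact (mem_filter.mp hf).2 htf

theorem isLinkedSet {S : Set V} (hS : IsWellLinkedSet G r S) :
    IsLinkedSet G (3 * r) (Nat.sqrt S.ncard / 2) S := by
  classical
  intro X hX
  obtain ⟨S, rfl⟩ :=
    (Set.finite_of_ncard_ne_zero (s := S) fun h => by simp [h] at hX).exists_finset_coe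
  rw [Set.ncard_coe_finset] at hX ⊢
  have hXS : (2 * #X + 2) ^ 2 ≤ #S := Nat.le_sqrt'.mp (by omega)
  obtain ⟨t, htX, ht⟩ := hS.exists_lt_card_filter_reachAvoiding hXS
  refine ⟨{v | ReachAvoiding G X (3 * r) t v}, fun x hx hxB => hxB.notMem_right hx,
    connSet_reachAvoiding htX, radiusLE_reachAvoiding htX, ?_⟩
  have hinter : (↑S ∩ {v | ReachAvoiding G X (3 * r) t v} : Set V) =
      ↑(S.filter (ReachAvoiding G X (3 * r) t)) := by
    ext; simp
  rw [hinter, Set.ncard_coe_finset]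
  exact hS.lt_two_mul_card_filter_reachAvoiding (by nlinarith) ht

end IsWellLinkedSet

lemma exists_isWellLinkedSet_ncard_eq_wellNum [Finite V] (G : SimpleGraph V) (r : ℕ) :
    ∃ S : Set V, IsWellLinkedSet G r S ∧ S.ncard = wellNum G r := by
  have hempty : IsWellLinkedSet G r ∅ := fun A _ hA _ _ Y hY => by
    rw [Set.subset_empty_iff, coe_eq_empty] at hA
    simp [hA] at hY
  have h0 : 0 ∈ {n | ∃ S : Set V, IsWellLinkedSet G r S ∧ S.ncard = n} :=
    ⟨∅, hempty, Set.ncard_empty V⟩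
  refine Nat.sSup_mem ⟨0, h0⟩ ⟨Nat.card V, ?_⟩
  rintro _ ⟨S, -, rfl⟩
  exact Set.ncard_le_card S

lemma IsLinkedSet.le_linkNum [Fintype V] {G : SimpleGraph V} {r k : ℕ} {S : Set V}
    (h : IsLinkedSet G r k S) : k ≤ linkNum G r := by
  refine le_csSup ⟨Fintype.card V, ?_⟩ ⟨S, h⟩
  rintro k ⟨S, hS⟩
  by_contra! hk
  obtain ⟨B, hBX, hB, -⟩ := hS univ (by simpa using hk)
  obtain ⟨⟨b, hb⟩⟩ := hB.nonempty
  exact hBX b (mem_univ b) hb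

lemma Nat.lt_four_mul_one_add_sqrt_div_two_sq (n : ℕ) : n < 4 * (1 + Nat.sqrt n / 2) ^ 2 :=
  calc n < (Nat.sqrt n + 1) ^ 2 := Nat.lt_succ_sqrt' n
    _ ≤ (2 * (1 + Nat.sqrt n / 2)) ^ 2 := Nat.pow_le_pow_left (by omega) 2
    _ = 4 * (1 + Nat.sqrt n / 2) ^ 2 := by ring

/-- `well_r(G) ≤ 4 · (1 + link_{3r}(G))²`; in fact, every depth-`r` well-linked
set `S` is depth-`3r` `⌊√|S|/2⌋`-linked. -/
theorem wellNum_le_sq_linkNum {V : Type*} [Fintype V] (G : SimpleGraph V) (r : ℕ) :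
    wellNum G r ≤ 4 * (1 + linkNum G (3 * r)) ^ 2 ∧
    ∀ S : Set V, IsWellLinkedSet G r S →
      IsLinkedSet G (3 * r) (Nat.sqrt S.ncard / 2) S := by
  refine ⟨?_, fun S hS => hS.isLinkedSet⟩
  obtain ⟨S, hS, hcard⟩ := exists_isWellLinkedSet_ncard_eq_wellNum G r
  calc wellNum G r = S.ncard := hcard.symm
    _ ≤ 4 * (1 + Nat.sqrt S.ncard / 2) ^ 2 := (Nat.lt_four_mul_one_add_sqrt_div_two_sq _).le
    _ ≤ 4 * (1 + linkNum G (3 * r)) ^ 2 := by gcongr; exact hS.isLinkedSet.le_linkNum
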